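/- arXiv:1404.1817 — 6 statements merged into one kernel-verified Lean document; each statement's English description precedes it below -/
import Mathlib

section
/- Let I be a finite nonempty index set and (G_i)_{i∈I} a family of groups. Assume there are two distinct indices i₀, i₁ ∈ I such that G_{i₀} is an infinite group and G_{i₁} is a nontrivial group. Then for every element g of the free product ∗_{i∈I} G_i with g ≠ 1, the centralizer of g in ∗_{i∈I} G_i is a subgroup of infinite index. -/
/-!
Each factor is malnormal in the free product: if `t⁻¹ * of z * t ∈ G i` with `z ≠ 1`, then
`t ∈ G i`. Indeed, after stripping off a leading `G i`-letter, `t` becomes a reduced word `u`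
not starting in `G i`, and then `u⁻¹ z' u` is a reduced word of length at least three.
Hence the centralizer of a nontrivial element of `G i` lies in `G i`, and `G i₀` has
infinite index: for a fixed `y ≠ 1` in `G i₁`, the cosets of `of x * of y`, `x ∈ G i₀`, are
pairwise distinct. A finite-index centralizer of `g` would contain some `of z` with
`1 ≠ z ∈ G i₀`, as `G i₀` is infinite; then `g ∈ G i₀`, so its centralizer lies in `G i₀`
and has infinite index after all.
-/

theorem Subgroup.exists_ne_one_map_mem_of_index_ne_zero {A B : Type*} [Group A] [Group B]
    [Infinite A] (f : A →* B) {K : Subgroup B} (hK : K.index ≠ 0) : ∃ a ≠ 1, f a ∈ K := by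
  have hcomap : (K.comap f).index ≠ 0 := fun h =>
    hK (index_eq_zero_of_relIndex_eq_zero (index_comap K f ▸ h))
  have hne : K.comap f ≠ ⊥ := by
    rintro hbot
    rw [hbot, index_bot, Nat.card_eq_zero_of_infinite] at hcomap
    exact hcomap rfl
  obtain ⟨⟨a, ha⟩, ha1⟩ := ne_bot_iff_exists_ne_one.mp hne
  exact ⟨a, fun h => ha1 (Subtype.ext h), ha⟩

namespace Monoid.CoprodI

variable {ι : Type*} {G : ι → Type*} [∀ i, Group (G i)]

theorem NeWord.toList_eq_of_prod_eq {i j k l : ι} {w₁ : NeWord G i j} {w₂ : NeWord G k l}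
    (h : w₁.prod = w₂.prod) : w₁.toList = w₂.toList := by
  classical
  exact congrArg Word.toList (Word.equiv.symm.injective h)

theorem NeWord.inv_mul_of_mul_notMem_range {i j k : ι} (u : NeWord G j k) (hj : j ≠ i)
    {z : G i} (hz : z ≠ 1) : u.prod⁻¹ * of z * u.prod ∉ (of : G i →* CoprodI G).range := by
  rintro ⟨c, hc⟩
  have hc1 : c ≠ 1 := by
    rintro rfl
    rw [map_one, eq_comm, mul_assoc, inv_mul_eq_one, right_eq_mul,
      map_eq_one_iff _ (of_injective i)] at hc
    exact hz hc
  let v := (u.inv.append hj (NeWord.singleton z hz)).append hj.symm u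
  have hv : (NeWord.singleton c hc1).prod = v.prod := by
    simp only [v, NeWord.append_prod, NeWord.prod_singleton, NeWord.inv_prod, hc]
  have hlen := congrArg List.length (NeWord.toList_eq_of_prod_eq hv)
  have h₁ := List.length_pos_of_ne_nil u.inv.toList_ne_nil
  have h₂ := List.length_pos_of_ne_nil u.toList_ne_nil
  simp only [v, NeWord.toList, List.length_append, List.length_singleton] at hlen
  omega

theorem exists_eq_of_mul_prod_fstIdx_ne (i : ι) (t : CoprodI G) :
    ∃ (p : G i) (w : Word G), w.fstIdx ≠ some i ∧ t = of p * w.prod := by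
  classical
  let pr := Word.equivPair i (Word.equiv t)
  refine ⟨pr.head, pr.tail, pr.fstIdx_ne, ?_⟩
  rw [← Word.prod_rcons, ← Word.equivPair_symm, Equiv.symm_apply_apply]
  exact (Word.equiv.symm_apply_apply t).symm

theorem mem_range_of_conj_mem_range {i : ι} {t : CoprodI G} {z : G i} (hz : z ≠ 1)
    (h : t⁻¹ * of z * t ∈ (of : G i →* CoprodI G).range) :
    t ∈ (of : G i →* CoprodI G).range := by
  obtain ⟨p, w, hw, rfl⟩ := exists_eq_of_mul_prod_fstIdx_ne i t
  rcases eq_or_ne w Word.empty with rfl | hne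
  · exact ⟨p, by rw [Word.prod_empty, mul_one]⟩
  obtain ⟨j, k, u, rfl⟩ := NeWord.of_word w hne
  have hj : j ≠ i := by
    rintro rfl
    exact hw (by simp [Word.fstIdx, NeWord.toWord])
  refine absurd ?_ (u.inv_mul_of_mul_notMem_range hj (z := p⁻¹ * z * p)
    (by rwa [Ne, mul_assoc, inv_mul_eq_one, right_eq_mul]))
  simpa [mul_assoc, NeWord.prod] using h

theorem centralizer_of_le_range {i : ι} {a : G i} (ha : a ≠ 1) :
    Subgroup.centralizer {of a} ≤ (of : G i →* CoprodI G).range := fun h hh =>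
  mem_range_of_conj_mem_range ha ⟨a, by
    rw [Subgroup.mem_centralizer_singleton_iff] at hh
    rw [mul_assoc, ← hh, inv_mul_cancel_left]⟩

theorem index_range_of_eq_zero {i j : ι} (hij : i ≠ j) [Infinite (G i)] [Nontrivial (G j)] :
    (of : G i →* CoprodI G).range.index = 0 := by
  obtain ⟨y, hy⟩ := exists_ne (1 : G j)
  rw [Subgroup.index_eq_zero_iff_infinite]
  refine Infinite.of_injective (fun x : G i => ((of x * of y : CoprodI G) : CoprodI G ⧸ _))
    fun x x' hxx' => ?_
  rw [QuotientGroup.eq] at hxx'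
  by_contra hne
  refine (NeWord.singleton y hy).inv_mul_of_mul_notMem_range hij.symm (z := x⁻¹ * x')
    (by rwa [Ne, inv_mul_eq_one]) ?_
  simpa [mul_assoc] using hxx'

end Monoid.CoprodI

open Monoid.CoprodI

theorem centralizer_infinite_index_coprodI_general
    {I : Type*} (G : I → Type*) [∀ i, Group (G i)]
    (i₀ i₁ : I) (hne : i₀ ≠ i₁) [Infinite (G i₀)] [Nontrivial (G i₁)]
    (g : Monoid.CoprodI G) (hg : g ≠ 1) :
    (Subgroup.centralizer ({g} : Set (Monoid.CoprodI G))).index = 0 := by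
  by_contra hC
  obtain ⟨z, hz, hzg⟩ := Subgroup.exists_ne_one_map_mem_of_index_ne_zero (of : G i₀ →* _) hC
  have hgz : g ∈ Subgroup.centralizer {of z} := by
    rw [Subgroup.mem_centralizer_singleton_iff] at hzg ⊢
    exact hzg.symm
  obtain ⟨a, rfl⟩ := centralizer_of_le_range hz hgz
  have ha : a ≠ 1 := by
    rintro rfl
    exact hg (map_one _)
  have hdvd := Subgroup.index_dvd_of_le (centralizer_of_le_range ha)
  rw [index_range_of_eq_zero hne] at hdvd
  exact hC (Nat.eq_zero_of_zero_dvd hdvd)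

/-- Let `I` be a finite nonempty index set and `(G i)_{i ∈ I}` a family of
groups. Assume there are two distinct indices `i₀ i₁ : I` such that `G i₀` is infinite and
`G i₁` is nontrivial. Then for every `g ≠ 1` in the free product `∗_{i ∈ I} G i`
(`Monoid.CoprodI G`), the centralizer of `g` has infinite index. -/
theorem centralizer_infinite_index_coprodI
    {I : Type*} [Fintype I] [Nonempty I] (G : I → Type*) [∀ i, Group (G i)]
    (i₀ i₁ : I) (hne : i₀ ≠ i₁) [Infinite (G i₀)] [Nontrivial (G i₁)]
    (g : Monoid.CoprodI G) (hg : g ≠ 1) :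
    (Subgroup.centralizer ({g} : Set (Monoid.CoprodI G))).index = 0 :=
  centralizer_infinite_index_coprodI_general G i₀ i₁ hne g hg
end

section
/- Let G₁ be an infinite group and G₂ a nontrivial group. Then for every element g ≠ 1 of the free product G₁ ∗ G₂, the centralizer of g in G₁ ∗ G₂ is a subgroup of infinite index. -/
/-!
If the centralizer of `g` had finite index, so would its normal core `N`; as `G₁` is infinite,
`N` contains some `inl a` with `a ≠ 1`, and with it all of its conjugates, which therefore
commute with `g`. Comparing reduced words of `of a * x` and `x * of a'` shows that in a free
product only elements of the `i`-th factor can conjugate one nontrivial element of that factor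
into another. Applied to `x = g`, this gives `g = inl y`; applied to the conjugate of `inl a` by
some `inr b` with `b ≠ 1`, it gives `(inr b)⁻¹ * inl y * inr b = inl y'`; applied once more,
with `x = inr b ∉ range inl`, it gives `y = 1`.
-/

open Monoid

theorem List.exists_eq_cons_of_head?_map_fst_eq {ι : Type*} {β : ι → Type*}
    {l : List (Σ i, β i)} {i : ι} (h : l.head?.map Sigma.fst = some i) :
    ∃ m t, l = ⟨i, m⟩ :: t := by
  rcases l with _ | ⟨⟨j, m⟩, t⟩
  · simp at h
  · obtain rfl : j = i := by simpa using h
    exact ⟨m, t, rfl⟩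

theorem List.exists_eq_concat_of_getLast?_map_fst_eq {ι : Type*} {β : ι → Type*}
    {l : List (Σ i, β i)} {i : ι} (h : l.getLast?.map Sigma.fst = some i) :
    ∃ s m, l = s ++ [⟨i, m⟩] := by
  rcases l.eq_nil_or_concat with rfl | ⟨s, ⟨j, m⟩, rfl⟩
  · simp at h
  · obtain rfl : j = i := by simpa using h
    exact ⟨s, m, List.concat_eq_append ..⟩

theorem Subgroup.exists_ne_one_map_mem {G H : Type*} [Group G] [Group H] [Infinite G]
    (f : G →* H) (N : Subgroup H) [N.FiniteIndex] : ∃ a ≠ 1, f a ∈ N := by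
  have hfin : (N.comap f).index ≠ 0 := by
    rw [index_comap, relIndex]
    exact FiniteIndex.index_ne_zero
  have hne : N.comap f ≠ ⊥ := by
    rintro hbot
    rw [hbot, index_bot, Nat.card_eq_zero_of_infinite] at hfin
    exact hfin rfl
  obtain ⟨⟨a, ha⟩, ha₁⟩ := ne_bot_iff_exists_ne_one.mp hne
  exact ⟨a, fun h => ha₁ (Subtype.ext h), ha⟩

theorem Subgroup.commute_conj_of_mem_normalCore_centralizer {G : Type*} [Group G] {g x : G}
    (hx : x ∈ (centralizer {g}).normalCore) (h : G) : Commute x (h * g * h⁻¹) := by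
  have hconj : h⁻¹ * x * h * g = g * (h⁻¹ * x * h) := by
    simpa using mem_centralizer_singleton_iff.mp (hx h⁻¹)
  calc x * (h * g * h⁻¹) = h * (h⁻¹ * x * h * g) * h⁻¹ := by group
    _ = h * (g * (h⁻¹ * x * h)) * h⁻¹ := by rw [hconj]
    _ = h * g * h⁻¹ * x := by group

namespace Monoid.CoprodI

variable {ι : Type*}

section Monoid

variable {M : ι → Type*} [∀ i, Monoid (M i)]

def IsReduced (l : List (Σ i, M i)) : Prop :=
  (∀ p ∈ l, p.2 ≠ 1) ∧ l.IsChain fun p q => p.1 ≠ q.1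

def listProd (l : List (Σ i, M i)) : CoprodI M := (l.map fun p => of p.2).prod

@[simp] theorem listProd_nil : listProd ([] : List (Σ i, M i)) = 1 := rfl

@[simp] theorem listProd_cons (p : Σ i, M i) (l : List (Σ i, M i)) :
    listProd (p :: l) = of p.2 * listProd l := List.prod_cons

@[simp] theorem listProd_append (l₁ l₂ : List (Σ i, M i)) :
    listProd (l₁ ++ l₂) = listProd l₁ * listProd l₂ := by
  simp [listProd]

theorem exists_isReduced_listProd_eq (x : CoprodI M) : ∃ l, IsReduced l ∧ listProd l = x := by
  classical
  exact ⟨(Word.equiv x).toList, ⟨Word.ne_one _, Word.chain_ne _⟩, Word.equiv.symm_apply_apply x⟩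

theorem IsReduced.eq_of_listProd_eq {l₁ l₂ : List (Σ i, M i)} (h₁ : IsReduced l₁)
    (h₂ : IsReduced l₂) (h : listProd l₁ = listProd l₂) : l₁ = l₂ := by
  classical
  exact congrArg Word.toList <|
    Word.equiv.symm.injective (a₁ := ⟨l₁, h₁.1, h₁.2⟩) (a₂ := ⟨l₂, h₂.1, h₂.2⟩) h

theorem IsReduced.infix {l₁ l₂ : List (Σ i, M i)} (hl : IsReduced l₂) (h : l₁ <:+: l₂) :
    IsReduced l₁ :=
  ⟨fun p hp => hl.1 p (h.subset hp), hl.2.infix h⟩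

theorem IsReduced.cons {l : List (Σ i, M i)} (hl : IsReduced l) {i : ι} {m : M i} (hm : m ≠ 1)
    (h : l.head?.map Sigma.fst ≠ some i) : IsReduced (⟨i, m⟩ :: l) := by
  refine ⟨List.forall_mem_cons.2 ⟨hm, hl.1⟩, List.isChain_cons.2 ⟨?_, hl.2⟩⟩
  intro p hp hip
  exact h (by simp [Option.mem_def.1 hp, ← hip])

theorem IsReduced.concat {l : List (Σ i, M i)} (hl : IsReduced l) {i : ι} {m : M i} (hm : m ≠ 1)
    (h : l.getLast?.map Sigma.fst ≠ some i) : IsReduced (l ++ [⟨i, m⟩]) := by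
  refine ⟨List.forall_mem_append.2 ⟨hl.1, by simpa using hm⟩,
    List.isChain_append.2 ⟨hl.2, List.isChain_singleton _, ?_⟩⟩
  intro p hp q hq hpq
  obtain rfl : ⟨i, m⟩ = q := by simpa using hq
  exact h (by simp [Option.mem_def.1 hp, hpq])

end Monoid

variable {G : ι → Type*} [∀ i, Group (G i)]

theorem of_mul_listProd_ne {l : List (Σ i, G i)} (hl : IsReduced l) (hl₀ : l ≠ []) {i : ι}
    {a a' : G i} (ha : a ≠ 1) (ha' : a' ≠ 1) (hhead : l.head?.map Sigma.fst ≠ some i)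
    (hlast : l.getLast?.map Sigma.fst ≠ some i) :
    of a * listProd l ≠ listProd l * of a' := by
  intro h
  have hl' := (hl.cons ha hhead).eq_of_listProd_eq (hl.concat ha' hlast) (by simpa using h)
  obtain ⟨p, t, rfl⟩ := List.exists_cons_of_ne_nil hl₀
  simp only [List.cons_append, List.cons.injEq] at hl'
  exact hhead (by simp [← hl'.1])

-- A first or last letter from the `i`-th factor is absorbed into `a` resp. `a'`.
theorem listProd_mem_range_of_of_mul_eq {l : List (Σ i, G i)} (hl : IsReduced l) {i : ι}
    {a a' : G i} (ha : a ≠ 1) (h : of a * listProd l = listProd l * of a') :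
    listProd l ∈ (of : G i →* _).range := by
  by_cases hhead : l.head?.map Sigma.fst = some i
  · obtain ⟨m, t, rfl⟩ := l.exists_eq_cons_of_head?_map_fst_eq hhead
    have ht := listProd_mem_range_of_of_mul_eq (hl.infix (t.suffix_cons _).isInfix)
      (a := m⁻¹ * a * m) (a' := a') (by simpa [mul_assoc, inv_mul_eq_one] using ha) (by
        simp only [listProd_cons, mul_assoc] at h
        simp only [map_mul, map_inv, mul_assoc, h, inv_mul_cancel_left])
    simpa using mul_mem (MonoidHom.mem_range.2 ⟨m, rfl⟩) ht
  by_cases hlast : l.getLast?.map Sigma.fst = some i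
  · obtain ⟨s, z, rfl⟩ := l.exists_eq_concat_of_getLast?_map_fst_eq hlast
    have hs := listProd_mem_range_of_of_mul_eq (hl.infix (List.prefix_append _ _).isInfix)
      (a := a) (a' := z * a' * z⁻¹) ha (by
        simp only [listProd_append, listProd_cons, listProd_nil, mul_one] at h
        simp only [map_mul, map_inv, ← mul_assoc, ← h, mul_inv_cancel_right])
    simpa using mul_mem hs (MonoidHom.mem_range.2 ⟨z, rfl⟩)
  rcases eq_or_ne l [] with rfl | hl₀
  · exact one_mem _
  have ha' : a' ≠ 1 := by
    rintro rfl
    exact ha (of_injective i (by simpa using h))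
  exact absurd h (of_mul_listProd_ne hl hl₀ ha ha' hhead hlast)
termination_by l.length

theorem mem_range_of_of_mul_eq {i : ι} {a a' : G i} (ha : a ≠ 1) {x : CoprodI G}
    (h : of a * x = x * of a') : x ∈ (of : G i →* _).range := by
  obtain ⟨l, hl, rfl⟩ := exists_isReduced_listProd_eq x
  exact listProd_mem_range_of_of_mul_eq hl ha h

end Monoid.CoprodI

namespace Monoid.Coprod

open CoprodI

universe u v

variable {G₁ : Type u} {G₂ : Type v} [Group G₁] [Group G₂]

/-- The factors of `G₁ ∗ G₂`, lifted to a common universe so that `CoprodI` applies. -/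
abbrev factors (G₁ : Type u) (G₂ : Type v) (b : Bool) : Type (max u v) :=
  cond b (ULift.{v} G₁) (ULift.{u} G₂)

instance : ∀ b, Group (factors G₁ G₂ b)
  | true => inferInstanceAs (Group (ULift G₁))
  | false => inferInstanceAs (Group (ULift G₂))

noncomputable def toCoprodI : G₁ ∗ G₂ →* CoprodI (factors G₁ G₂) :=
  lift ((of (i := true)).comp MulEquiv.ulift.symm.toMonoidHom)
    ((of (i := false)).comp MulEquiv.ulift.symm.toMonoidHom)

noncomputable def ofCoprodI : CoprodI (factors G₁ G₂) →* G₁ ∗ G₂ :=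
  CoprodI.lift fun
    | true => inl.comp MulEquiv.ulift.toMonoidHom
    | false => inr.comp MulEquiv.ulift.toMonoidHom

theorem toCoprodI_inl (a : G₁) :
    toCoprodI (inl a : G₁ ∗ G₂) = of (i := true) (M := factors G₁ G₂) (ULift.up a) := rfl

theorem ofCoprodI_of_true (a : ULift.{v} G₁) :
    ofCoprodI (of (i := true) (M := factors G₁ G₂) a) = inl a.down :=
  CoprodI.lift_of _ _

theorem ofCoprodI_toCoprodI (x : G₁ ∗ G₂) : ofCoprodI (toCoprodI x) = x := by
  change (ofCoprodI.comp toCoprodI) x = MonoidHom.id _ x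
  congr 1
  ext <;> simp [toCoprodI, ofCoprodI]

theorem mem_range_inl_of_inl_mul_eq {a a' : G₁} (ha : a ≠ 1) {x : G₁ ∗ G₂}
    (h : inl a * x = x * inl a') : x ∈ (inl : G₁ →* G₁ ∗ G₂).range := by
  obtain ⟨u, hu⟩ := CoprodI.mem_range_of_of_mul_eq (i := true) (a := ULift.up a)
    (fun h => ha (congrArg ULift.down h)) (by simpa [toCoprodI_inl] using congrArg toCoprodI h)
  exact ⟨u.down, by rw [← ofCoprodI_of_true, hu, ofCoprodI_toCoprodI]⟩

end Monoid.Coprod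

/-- Let `G₁` be an infinite group and `G₂` a nontrivial group. Then for every
element `g ≠ 1` of the free product `G₁ ∗ G₂` (`Monoid.Coprod G₁ G₂`), the centralizer of `g`
is a subgroup of infinite index. -/
theorem centralizer_infinite_index_coprod
    (G₁ G₂ : Type*) [Group G₁] [Group G₂] [Infinite G₁] [Nontrivial G₂]
    (g : Coprod G₁ G₂) (hg : g ≠ 1) :
    (Subgroup.centralizer ({g} : Set (Coprod G₁ G₂))).index = 0 := by
  by_contra hfin
  have : (Subgroup.centralizer {g}).FiniteIndex := ⟨hfin⟩
  obtain ⟨a, ha, haN⟩ := (Subgroup.centralizer {g}).normalCore.exists_ne_one_map_mem Coprod.inl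
  obtain ⟨y, rfl⟩ := Coprod.mem_range_inl_of_inl_mul_eq ha
    (by simpa using (Subgroup.commute_conj_of_mem_normalCore_centralizer haN 1).eq)
  obtain ⟨b, hb⟩ := exists_ne (1 : G₂)
  obtain ⟨y', hy'⟩ := Coprod.mem_range_inl_of_inl_mul_eq ha
    (Subgroup.commute_conj_of_mem_normalCore_centralizer haN (Coprod.inr b)⁻¹)
  have hy : y ≠ 1 := fun h => hg (by simp [h])
  obtain ⟨c, hc⟩ := Coprod.mem_range_inl_of_inl_mul_eq (x := Coprod.inr b) hy (a' := y')
    (by rw [hy']; group)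
  exact hb (by simpa using (congrArg Coprod.snd hc).symm)
end

section
/- Let G₁ and G₂ be groups and let y be the image in the free product G₁ ∗ G₂ of a nontrivial element of G₁ under the canonical injection inl. If x is an element of G₁ ∗ G₂ that is not in the image of inl, then x and y do not commute, i.e., x·y ≠ y·x. -/
/-!
Write `x = h * y` with `h ∈ G₁` and the reduced word of `y` not beginning with a letter of `G₁`.
If `x` commutes with `a ≠ 1`, then `y * a = b * y` with `b = h⁻¹ * a * h ≠ 1`. The reduced word
of `b * y` begins with a letter of `G₁`. On the other hand, multiplying on the right by a letter
of `G₁` does not change the first letter of a reduced word, unless the product collapses into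
`G₁`. Hence `y * a`, and with it `x`, lies in `G₁`.
-/

open Monoid

namespace Monoid.CoprodI

variable {ι : Type*} [DecidableEq ι]

namespace Word

variable {M : ι → Type*} [∀ i, Monoid (M i)] [∀ i, DecidableEq (M i)]

theorem equiv_mul (x y : CoprodI M) : equiv (x * y) = x • equiv y :=
  mul_smul x y (empty : Word M)

theorem fstIdx_of_smul {i : ι} {m : M i} (hm : m ≠ 1) {w : Word M} (hw : w.fstIdx ≠ some i) :
    (of m • w).fstIdx = some i := by
  rw [← cons_eq_smul (h1 := hw) (h2 := hm), fstIdx_cons]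

theorem fstIdx_equiv_of_ne {i j : ι} (hij : i ≠ j) (m : M i) :
    (equiv (of m)).fstIdx ≠ some j := by
  change (of m • empty).fstIdx ≠ some j
  by_cases hm : m = 1
  · simp [hm, fstIdx]
  · rw [fstIdx_of_smul hm (by simp [fstIdx])]
    exact fun h => hij (Option.some.inj h)

theorem fstIdx_equiv_prod_mul_of_eq_or_mem_mrange {i : ι} (a : M i) (t : Word M) :
    (equiv (t.prod * of a)).fstIdx = t.fstIdx ∨
      t.prod * of a ∈ MonoidHom.mrange (of : M i →* CoprodI M) := by
  induction t using consRecOn with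
  | empty => exact .inr ⟨a, by rw [prod_empty, one_mul]⟩
  | cons j m t hidx hm ih =>
    rw [prod_cons, mul_assoc, equiv_mul, fstIdx_cons]
    rcases ih with ih | ⟨c, hc⟩
    · exact .inl (fstIdx_of_smul hm (ih ▸ hidx))
    · rw [← hc]
      by_cases hji : j = i
      · subst hji
        exact .inr ⟨m * c, map_mul _ _ _⟩
      · exact .inl (fstIdx_of_smul hm (fstIdx_equiv_of_ne (Ne.symm hji) c))

end Word

variable {G : ι → Type*} [∀ i, Group (G i)]

theorem mem_range_of_of_commute {i : ι} {a : G i} (ha : a ≠ 1) {x : CoprodI G}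
    (hx : Commute x (of a)) : x ∈ (of : G i →* CoprodI G).range := by
  classical
  set p := Word.equivPair i (Word.equiv x)
  set y := p.tail.prod
  have hxy : x = of p.head * y := by
    rw [← Word.prod_smul, Word.equivPair_head_smul_equivPair_tail]
    exact (Word.equiv.symm_apply_apply x).symm
  set b := p.head⁻¹ * a * p.head
  have hb : b ≠ 1 := by
    simpa [b, mul_assoc, inv_mul_eq_one, mul_eq_one_iff_eq_inv] using ha
  have hyb : y * of a = of b * y := by
    have hx' : of p.head * y * of a = of a * (of p.head * y) := hxy ▸ hx
    simp only [b, map_mul, map_inv, mul_assoc]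
    rw [eq_inv_mul_iff_mul_eq, ← mul_assoc, hx']
  rcases Word.fstIdx_equiv_prod_mul_of_eq_or_mem_mrange a p.tail with hidx | ⟨c, hc⟩
  · have hbidx : (Word.equiv (y * of a)).fstIdx = some i := by
      rw [hyb, Word.equiv_mul, show Word.equiv y = p.tail from Word.equiv.apply_symm_apply _]
      exact Word.fstIdx_of_smul hb p.fstIdx_ne
    exact absurd (hbidx ▸ hidx).symm p.fstIdx_ne
  · refine ⟨p.head * c * a⁻¹, ?_⟩
    simp [hxy, hc, y, mul_assoc]

end Monoid.CoprodI

namespace Monoid.Coprod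

universe u v

variable {G₁ : Type u} {G₂ : Type v} [Group G₁] [Group G₂]

-- `ULift` puts `G₁` and `G₂` into a common universe, as a `Bool`-indexed family requires.
abbrev boolFamily (G₁ : Type u) (G₂ : Type v) (b : Bool) : Type max u v :=
  cond b (ULift.{v} G₁) (ULift.{u} G₂)

instance : ∀ b, Group (boolFamily G₁ G₂ b)
  | true => ULift.group
  | false => ULift.group

def equivCoprodI : Coprod G₁ G₂ ≃* CoprodI (boolFamily G₁ G₂) :=
  MonoidHom.toMulEquiv
    (lift ((CoprodI.of (i := true)).comp MulEquiv.ulift.symm.toMonoidHom)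
      ((CoprodI.of (i := false)).comp MulEquiv.ulift.symm.toMonoidHom))
    (CoprodI.lift fun
      | true => inl.comp MulEquiv.ulift.toMonoidHom
      | false => inr.comp MulEquiv.ulift.toMonoidHom)
    (by ext <;> rfl)
    (CoprodI.ext_hom _ _ fun | true => by ext; rfl | false => by ext; rfl)

theorem equivCoprodI_inl (a : G₁) :
    equivCoprodI (inl a : Coprod G₁ G₂) = CoprodI.of (i := true) (ULift.up a) :=
  rfl

theorem mem_range_inl_of_commute {a : G₁} (ha : a ≠ 1) {x : Coprod G₁ G₂}
    (hx : Commute x (inl a)) : x ∈ (inl : G₁ →* Coprod G₁ G₂).range := by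
  have hx' := hx.map (equivCoprodI : Coprod G₁ G₂ ≃* _)
  rw [equivCoprodI_inl] at hx'
  obtain ⟨g, hg⟩ := CoprodI.mem_range_of_of_commute (fun h => ha (congrArg ULift.down h)) hx'
  exact ⟨g.down, equivCoprodI.injective (by rw [equivCoprodI_inl]; exact hg)⟩

end Monoid.Coprod

/-- Let `G₁`, `G₂` be groups and `y = inl a` the image in the free product
`G₁ ∗ G₂` of a nontrivial element `a` of `G₁`. If `x ∈ G₁ ∗ G₂` is not in the image of `inl`,
then `x` and `y` do not commute. -/
theorem not_commute_of_not_mem_inl_range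
    (G₁ G₂ : Type*) [Group G₁] [Group G₂] (a : G₁) (ha : a ≠ 1)
    (x : Coprod G₁ G₂)
    (hx : x ∉ (Coprod.inl : G₁ →* Coprod G₁ G₂).range) :
    x * Coprod.inl a ≠ Coprod.inl a * x :=
  fun h => hx (Coprod.mem_range_inl_of_commute ha h)
end

section
/- Let (G_i)_{i∈I} be a family of groups, let i ∈ I, and let a be a nontrivial element of G_i. If x is an element of the free product ∗_{i∈I} G_i that is not in the range of the canonical injection of_i : G_i → ∗_{i∈I} G_i, then x does not commute with of_i(a), i.e., x·of_i(a) ≠ of_i(a)·x. -/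
/-!
The range of `of : G i →* ∗ G` is malnormal: if `y * of b * y⁻¹ = of c` with `b ≠ 1`, then `y`
lies in it. Induct on the syllable length of `y`. A first letter of `y` from `G i` can be moved
into `c`; a last letter from `G i` is the first letter of `y⁻¹`, which conjugates `of c` back to
`of b`. If neither end of the reduced word `w` of `y` comes from `G i`, then `w b w⁻¹` is a
reduced word beginning outside `G i`, so it is not `of c`. A commuting `x` is the case
`b = c = a`.
-/

open Monoid

namespace Monoid.CoprodI

variable {ι : Type*} {G : ι → Type*} [∀ i, Group (G i)]

theorem NeWord.length_toList_inv {j k : ι} (w : NeWord G j k) :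
    w.inv.toList.length = w.toList.length := by
  induction w with
  | singleton => rfl
  | append w₁ _ w₂ ih₁ ih₂ => simp [NeWord.inv, NeWord.toList, ih₁, ih₂, Nat.add_comm]

theorem NeWord.fstIdx_toWord {j k : ι} (w : NeWord G j k) : w.toWord.fstIdx = some j := by
  simp [Word.fstIdx, NeWord.toWord, w.toList_head?]

section Decidable

variable [DecidableEq ι] [∀ i, DecidableEq (G i)]

theorem Word.prod_equiv (x : CoprodI G) : (Word.equiv x).prod = x :=
  Word.equiv.symm_apply_apply x

theorem Word.equiv_prod (w : Word G) : Word.equiv w.prod = w :=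
  Word.equiv.apply_symm_apply w

theorem NeWord.equiv_prod {j k : ι} (w : NeWord G j k) : Word.equiv w.prod = w.toWord :=
  Word.equiv_prod w.toWord

theorem exists_neWord_prod_eq {x : CoprodI G} (hx : x ≠ 1) :
    ∃ (j k : ι) (w : NeWord G j k), w.prod = x := by
  obtain ⟨j, k, w, hw⟩ := NeWord.of_word (Word.equiv x) fun h ↦
    hx (by rw [← Word.prod_equiv x, h, Word.prod_empty])
  exact ⟨j, k, w, by rw [NeWord.prod, hw, Word.prod_equiv]⟩

def syllableLength (x : CoprodI G) : ℕ :=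
  (Word.equiv x).toList.length

theorem NeWord.syllableLength_prod {j k : ι} (w : NeWord G j k) :
    syllableLength w.prod = w.toList.length := by
  rw [syllableLength, NeWord.equiv_prod]
  rfl

theorem syllableLength_inv (x : CoprodI G) : syllableLength x⁻¹ = syllableLength x := by
  obtain rfl | hx := eq_or_ne x 1
  · rw [inv_one]
  obtain ⟨j, k, w, rfl⟩ := exists_neWord_prod_eq hx
  rw [← NeWord.inv_prod, NeWord.syllableLength_prod, NeWord.syllableLength_prod,
    NeWord.length_toList_inv]

theorem exists_eq_of_mul_of_syllableLength_lt {i : ι} {y : CoprodI G}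
    (hy : (Word.equiv y).fstIdx = some i) :
    ∃ (g : G i) (y' : CoprodI G), y = of g * y' ∧ syllableLength y' < syllableLength y := by
  set p := Word.equivPair i (Word.equiv y)
  have hp : Word.rcons p = Word.equiv y := (Word.equivPair i).symm_apply_apply _
  have hhead : p.head ≠ 1 := fun h1 ↦ by
    rw [Word.rcons, dif_pos h1] at hp
    exact p.fstIdx_ne (hp ▸ hy)
  refine ⟨p.head, p.tail.prod, ?_, ?_⟩
  · rw [← Word.prod_rcons, hp, Word.prod_equiv]
  · rw [syllableLength, syllableLength, Word.equiv_prod, ← hp, Word.rcons, dif_neg hhead]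
    simp

end Decidable

theorem NeWord.prod_ne_of {i j k : ι} (w : NeWord G j k) (hj : j ≠ i) (c : G i) :
    w.prod ≠ of c := by
  classical
  intro h
  have key := congrArg (fun x ↦ (Word.equivPair i (Word.equiv x)).tail) h
  rw [NeWord.equiv_prod,
    Word.equivPair_eq_of_fstIdx_ne (by rw [w.fstIdx_toWord]; simpa using hj)] at key
  change _ = (Word.equivPair i (of c • (Word.empty : Word G))).tail at key
  rw [Word.equivPair_smul_same, Word.equivPair_eq_of_fstIdx_ne (by simp [Word.fstIdx, Word.empty])]
    at key
  exact w.toList_ne_nil (congrArg Word.toList key)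

theorem mem_range_of_mul_of_mul_inv_eq_of {i : ι} {b c : G i} (hb : b ≠ 1) {y : CoprodI G}
    (h : y * of b * y⁻¹ = of c) : y ∈ (of : G i →* CoprodI G).range := by
  classical
  induction hn : syllableLength y using Nat.strong_induction_on generalizing y b c with
  | _ n ih =>
  have stripHead : ∀ {y' : CoprodI G} {b' c' : G i}, b' ≠ 1 → y' * of b' * y'⁻¹ = of c' →
      (Word.equiv y').fstIdx = some i → syllableLength y' ≤ n →
      y' ∈ (of : G i →* CoprodI G).range := by
    intro y' b' c' hb' h' hy' hlen
    obtain ⟨g, z, rfl, hz⟩ := exists_eq_of_mul_of_syllableLength_lt hy'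
    obtain ⟨g', hg'⟩ := ih _ (hz.trans_le hlen) hb' (c := g⁻¹ * c' * g)
      (by rw [map_mul, map_mul, map_inv, ← h']; group) rfl
    exact ⟨g * g', by rw [map_mul, hg']⟩
  obtain rfl | hy1 := eq_or_ne y 1
  · exact one_mem _
  obtain ⟨j, k, w, rfl⟩ := exists_neWord_prod_eq hy1
  by_cases hj : j = i
  · subst hj
    exact stripHead hb h (by rw [w.equiv_prod, w.fstIdx_toWord]) hn.le
  by_cases hk : k = i
  · subst hk
    have hc : c ≠ 1 := by
      rintro rfl
      rw [map_one, mul_inv_eq_one, mul_eq_left, map_eq_one_iff _ (of_injective _)] at h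
      exact hb h
    rw [← inv_mem_iff]
    refine stripHead hc (c' := b) (by rw [← h]; group) ?_ (by rw [syllableLength_inv, hn])
    rw [← NeWord.inv_prod, w.inv.equiv_prod, w.inv.fstIdx_toWord]
  · refine absurd ?_ (((w.append hk (.singleton b hb)).append (Ne.symm hk) w.inv).prod_ne_of hj c)
    rw [NeWord.append_prod, NeWord.append_prod, NeWord.prod_singleton, NeWord.inv_prod, h]

end Monoid.CoprodI

/-- Let `(G i)_{i ∈ I}` be a family of groups, `i ∈ I`, and `a` a nontrivial
element of `G i`. If `x` is an element of the free product `∗_{i ∈ I} G i` that is not in the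
range of the canonical injection `of : G i →* ∗_{i ∈ I} G i`, then `x` does not commute with
`of a`. -/
theorem not_commute_of_not_mem_of_range
    {I : Type*} (G : I → Type*) [∀ i, Group (G i)] (i : I) (a : G i) (ha : a ≠ 1)
    (x : CoprodI G)
    (hx : x ∉ (CoprodI.of : G i →* CoprodI G).range) :
    x * CoprodI.of a ≠ CoprodI.of a * x :=
  fun hcomm ↦ hx (CoprodI.mem_range_of_mul_of_mul_inv_eq_of ha (mul_inv_eq_of_eq_mul hcomm))
end

section
/- Let C₂ denote the cyclic group of order 2 (the multiplicative group Multiplicative (ZMod 2)), with nontrivial element u. In the free product C₂ ∗ C₂, let w = inl(u)·inr(u). Then the centralizer of w in C₂ ∗ C₂ equals the cyclic subgroup generated by w, i.e., the subgroup of all integer powers of w. -/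
/-!
Write `w = a * b` for two involutions `a`, `b`. Conjugation by `a` inverts `w`, so every element
of the group they generate is `w ^ k` or `w ^ k * a`, and `w ^ k * a` commutes with `w` only if
`w ^ 2 = 1`. In `C₂ ∗ C₂` this fails, as the two transpositions `(0 1)`, `(1 2)` of `Fin 3`
show: their product is a 3-cycle.
-/

open Monoid

section InvolutionPair

variable {G : Type*} [Group G] {a b : G}

theorem semiconjBy_mul_of_mul_self_eq_one (ha : a * a = 1) (hb : b * b = 1) :
    SemiconjBy a (a * b) (a * b)⁻¹ := by
  rw [SemiconjBy, mul_inv_rev, inv_eq_of_mul_eq_one_right ha, inv_eq_of_mul_eq_one_right hb,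
    ← mul_assoc, ha, one_mul, mul_assoc, ha, mul_one]

theorem mul_zpow_mul_eq_zpow_neg_mul (ha : a * a = 1) (hb : b * b = 1) (k : ℤ) :
    a * (a * b) ^ k = (a * b) ^ (-k) * a := by
  rw [zpow_neg, ← inv_zpow]
  exact (semiconjBy_mul_of_mul_self_eq_one ha hb).zpow_right k

theorem exists_zpow_or_zpow_mul_of_mem_closure (ha : a * a = 1) (hb : b * b = 1) {x : G}
    (hx : x ∈ Subgroup.closure {a, b}) : ∃ k : ℤ, x = (a * b) ^ k ∨ x = (a * b) ^ k * a := by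
  have hcomm := mul_zpow_mul_eq_zpow_neg_mul ha hb
  induction hx using Subgroup.closure_induction with
  | mem x hx =>
    rcases hx with rfl | hx
    · exact ⟨0, .inr (by rw [zpow_zero, one_mul])⟩
    · refine ⟨-1, .inr ?_⟩
      rw [Set.mem_singleton_iff.mp hx, ← hcomm, zpow_one, ← mul_assoc, ha, one_mul]
  | one => exact ⟨0, .inl (zpow_zero _).symm⟩
  | mul x y _ _ hx hy =>
    obtain ⟨k, rfl | rfl⟩ := hx <;> obtain ⟨m, rfl | rfl⟩ := hy
    · exact ⟨k + m, .inl (zpow_add _ _ _).symm⟩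
    · exact ⟨k + m, .inr (by rw [zpow_add, mul_assoc])⟩
    · exact ⟨k - m, .inr (by rw [mul_assoc, hcomm, ← mul_assoc, ← zpow_add, sub_eq_add_neg])⟩
    · refine ⟨k - m, .inl ?_⟩
      rw [mul_assoc, ← mul_assoc a, hcomm, mul_assoc, ha, mul_one, ← zpow_add, sub_eq_add_neg]
  | inv x _ hx =>
    obtain ⟨k, rfl | rfl⟩ := hx
    · exact ⟨-k, .inl (zpow_neg _ _).symm⟩
    · refine ⟨k, .inr ?_⟩
      rw [mul_inv_rev, inv_eq_of_mul_eq_one_right ha, ← zpow_neg, hcomm, neg_neg]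

theorem sq_eq_one_of_commute_zpow_mul (ha : a * a = 1) (hb : b * b = 1) {k : ℤ}
    (h : Commute ((a * b) ^ k * a) (a * b)) : (a * b) ^ 2 = 1 := by
  have h' : (a * b) ^ (k - 1) * a = (a * b) ^ (k + 1) * a :=
    calc (a * b) ^ (k - 1) * a = (a * b) ^ k * a * (a * b) := by
          rw [mul_assoc, (semiconjBy_mul_of_mul_self_eq_one ha hb).eq, ← mul_assoc,
            ← zpow_neg_one, ← zpow_add, sub_eq_add_neg]
      _ = (a * b) * ((a * b) ^ k * a) := h.eq
      _ = (a * b) ^ (k + 1) * a := by rw [← mul_assoc, ← zpow_one_add, add_comm]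
  have h'' := mul_right_cancel h'
  rwa [show k + 1 = k - 1 + 2 by ring, zpow_add, left_eq_mul, zpow_two, ← pow_two] at h''

theorem centralizer_singleton_mul_eq_zpowers (ha : a * a = 1) (hb : b * b = 1)
    (hgen : Subgroup.closure {a, b} = ⊤) (hab : (a * b) ^ 2 ≠ 1) :
    Subgroup.centralizer {a * b} = Subgroup.zpowers (a * b) := by
  refine le_antisymm (fun x hx ↦ ?_)
    (Subgroup.zpowers_le.mpr (Subgroup.mem_centralizer_singleton_iff.mpr rfl))
  obtain ⟨k, rfl | rfl⟩ :=
    exists_zpow_or_zpow_mul_of_mem_closure ha hb (hgen ▸ Subgroup.mem_top x)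
  · exact ⟨k, rfl⟩
  · exact absurd
      (sq_eq_one_of_commute_zpow_mul ha hb (Subgroup.mem_centralizer_singleton_iff.mp hx)) hab

end InvolutionPair

theorem exists_monoidHom_zmod_ofAdd_one_eq {G : Type*} [Group G] {n : ℕ} {x : G}
    (hx : x ^ n = 1) :
    ∃ f : Multiplicative (ZMod n) →* G, f (Multiplicative.ofAdd 1) = x := by
  let f : ℤ →+ Additive G := zmultiplesHom (Additive G) (Additive.ofMul x)
  have hf : f n = 0 := by simp [f, ← ofMul_pow, hx]
  refine ⟨AddMonoidHom.toMultiplicativeLeft (ZMod.lift n ⟨f, hf⟩), ?_⟩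
  have := ZMod.lift_coe n ⟨f, hf⟩ 1
  simp only [Int.cast_one, one_zsmul, f, zmultiplesHom_apply] at this
  exact congrArg Additive.toMul this

theorem Monoid.Coprod.closure_inl_inr_eq_top {G H : Type*} [Group G] [Group H] {g : G} {h : H}
    (hg : ∀ x, x ∈ Subgroup.zpowers g) (hh : ∀ y, y ∈ Subgroup.zpowers h) :
    Subgroup.closure {(Coprod.inl g : Coprod G H), Coprod.inr h} = ⊤ := by
  rw [eq_top_iff, ← closure_range_inl_union_inr (G := G) (H := H), Subgroup.closure_le,
    Set.union_subset_iff]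
  constructor
  · rintro _ ⟨x, rfl⟩
    obtain ⟨k, rfl⟩ := hg x
    rw [map_zpow]
    exact Subgroup.zpow_mem _ (Subgroup.subset_closure (.inl rfl)) k
  · rintro _ ⟨y, rfl⟩
    obtain ⟨k, rfl⟩ := hh y
    rw [map_zpow]
    exact Subgroup.zpow_mem _ (Subgroup.subset_closure (.inr rfl)) k

theorem mem_zpowers_ofAdd_one {n : ℕ} (x : Multiplicative (ZMod n)) :
    x ∈ Subgroup.zpowers (Multiplicative.ofAdd 1) := by
  obtain ⟨k, hk⟩ := ZMod.intCast_surjective x.toAdd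
  exact ⟨k, by simp only [← ofAdd_zsmul, zsmul_one, hk, ofAdd_toAdd]⟩

theorem inl_mul_inr_ofAdd_one_sq_ne_one :
    (Coprod.inl (Multiplicative.ofAdd (1 : ZMod 2)) *
      Coprod.inr (Multiplicative.ofAdd (1 : ZMod 2))) ^ 2 ≠ 1 := by
  obtain ⟨f, hf⟩ := exists_monoidHom_zmod_ofAdd_one_eq (n := 2)
    (x := Equiv.swap (0 : Fin 3) 1) (by decide)
  obtain ⟨g, hg⟩ := exists_monoidHom_zmod_ofAdd_one_eq (n := 2)
    (x := Equiv.swap (1 : Fin 3) 2) (by decide)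
  intro h
  have := congrArg (Coprod.lift f g) h
  rw [map_pow, map_mul, Coprod.lift_apply_inl, Coprod.lift_apply_inr, hf, hg, map_one] at this
  exact absurd this (by decide)

/-- Let `C₂ = Multiplicative (ZMod 2)` with nontrivial element
`u = Multiplicative.ofAdd 1`. In the free product `C₂ ∗ C₂` (the infinite dihedral group),
let `w = inl u * inr u`. Then the centralizer of `w` equals the cyclic subgroup generated by
`w`, i.e. the subgroup of all integer powers of `w`. -/
theorem centralizer_inl_mul_inr_eq_zpowers :
    Subgroup.centralizer
        ({Coprod.inl (Multiplicative.ofAdd (1 : ZMod 2)) *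
            Coprod.inr (Multiplicative.ofAdd (1 : ZMod 2))} :
          Set (Coprod (Multiplicative (ZMod 2)) (Multiplicative (ZMod 2)))) =
      Subgroup.zpowers
        (Coprod.inl (Multiplicative.ofAdd (1 : ZMod 2)) *
          Coprod.inr (Multiplicative.ofAdd (1 : ZMod 2))) := by
  have hu : Multiplicative.ofAdd (1 : ZMod 2) * Multiplicative.ofAdd 1 = 1 := by decide
  refine centralizer_singleton_mul_eq_zpowers (by rw [← map_mul, hu, map_one])
    (by rw [← map_mul, hu, map_one]) ?_ inl_mul_inr_ofAdd_one_sq_ne_one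
  exact Coprod.closure_inl_inr_eq_top mem_zpowers_ofAdd_one mem_zpowers_ofAdd_one
end

section
/- Let G₁, G₂, G₃ be three nontrivial groups. Then for every element g ≠ 1 of the free product G₁ ∗ G₂ ∗ G₃ (the coproduct of the family indexed by a three-element set), the centralizer of g in G₁ ∗ G₂ ∗ G₃ is a subgroup of infinite index. -/
open Monoid

namespace CoprodIAux

theorem conj_pow_succ {H : Type*} [Group H] (t u x : H) (n : ℕ) :
    t * (t ^ n * u * x * (t ^ n * u)⁻¹) * t⁻¹ =
      t ^ (n + 1) * u * x * (t ^ (n + 1) * u)⁻¹ := by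
  rw [pow_succ']; group

theorem conj_eq_of_comm {H : Type*} [Group H] (X Y x : H)
    (h : x * (X⁻¹ * Y) = (X⁻¹ * Y) * x) : X * x * X⁻¹ = Y * x * Y⁻¹ := by
  calc X * x * X⁻¹ = X * (x * (X⁻¹ * Y)) * Y⁻¹ := by group
    _ = X * ((X⁻¹ * Y) * x) * Y⁻¹ := by rw [h]
    _ = Y * x * Y⁻¹ := by group

open Monoid.CoprodI

variable {ι : Type*} {G : ι → Type*} [∀ i, Group (G i)]

theorem word_prod_injective [DecidableEq ι] [∀ i, DecidableEq (G i)] :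
    Function.Injective (Word.prod : Word G → CoprodI G) :=
  (Word.equiv (M := G)).symm.injective

theorem exists_neWord_prod_eq [DecidableEq ι] [∀ i, DecidableEq (G i)]
    (g : CoprodI G) (hg : g ≠ 1) : ∃ (i j : ι) (w : NeWord G i j), w.prod = g := by
  have hw : (Word.equiv g : Word G).prod = g := Word.equiv.symm_apply_apply g
  have hne : (Word.equiv g : Word G) ≠ Word.empty := by
    intro h
    rw [h, Word.prod_empty] at hw
    exact hg hw.symm
  obtain ⟨i, j, w, hwtw⟩ := NeWord.of_word (Word.equiv g) hne
  exact ⟨i, j, w, by rw [NeWord.prod, hwtw, hw]⟩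

theorem toWord_toList {i j : ι} (w : NeWord G i j) : w.toWord.toList = w.toList := rfl

variable {i j k m : ι}

/-- The reduced word `(a b)^n (a w a⁻¹) (b⁻¹ a⁻¹)^n`. -/
def conjNeWord (hki : k ≠ i) (hjk : j ≠ k) (hkm : k ≠ m)
    {a : G k} (ha : a ≠ 1) {b : G m} (hb : b ≠ 1) (w : NeWord G i j) : ℕ → NeWord G k k
  | 0 => .append (.singleton a ha) hki (.append w hjk (.singleton a⁻¹ (inv_ne_one.2 ha)))
  | n + 1 =>
      .append (.singleton a ha) hkm <|
      .append (.singleton b hb) hkm.symm <|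
      .append (conjNeWord hki hjk hkm ha hb w n) hkm <|
      .append (.singleton b⁻¹ (inv_ne_one.2 hb)) hkm.symm (.singleton a⁻¹ (inv_ne_one.2 ha))

theorem conjNeWord_length (hki : k ≠ i) (hjk : j ≠ k) (hkm : k ≠ m)
    {a : G k} (ha : a ≠ 1) {b : G m} (hb : b ≠ 1) (w : NeWord G i j) (n : ℕ) :
    (conjNeWord hki hjk hkm ha hb w n).toList.length = w.toList.length + 2 + 4 * n := by
  induction n with
  | zero => simp [conjNeWord]
  | succ n ih => simp [conjNeWord, ih]; ring

theorem conjNeWord_prod (hki : k ≠ i) (hjk : j ≠ k) (hkm : k ≠ m)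
    {a : G k} (ha : a ≠ 1) {b : G m} (hb : b ≠ 1) (w : NeWord G i j) (n : ℕ) :
    (conjNeWord hki hjk hkm ha hb w n).prod =
      ((of a * of b) ^ n * of a) * w.prod * ((of a * of b) ^ n * of a)⁻¹ := by
  induction n with
  | zero => simp [conjNeWord, mul_assoc]
  | succ n ih =>
    have hsucc : (conjNeWord hki hjk hkm ha hb w (n + 1)).prod =
        (of a * of b) * (conjNeWord hki hjk hkm ha hb w n).prod * (of a * of b)⁻¹ := by
      simp only [conjNeWord, NeWord.append_prod, NeWord.prod_singleton, map_inv]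
      group
    rw [hsucc, ih, conj_pow_succ]

end CoprodIAux

open CoprodIAux Monoid.CoprodI in
/-- Let `G₀`, `G₁`, `G₂` be three nontrivial groups. Then for every element
`g ≠ 1` of the free product `G₀ ∗ G₁ ∗ G₂` (the coproduct of the family indexed by the
three-element set `Fin 3`), the centralizer of `g` is a subgroup of infinite index. -/
theorem centralizer_infinite_index_three_factors
    (G : Fin 3 → Type*) [∀ i, Group (G i)] [∀ i, Nontrivial (G i)]
    (g : CoprodI G) (hg : g ≠ 1) :
    (Subgroup.centralizer ({g} : Set (CoprodI G))).index = 0 := by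
  classical
  obtain ⟨i, j, w, hw⟩ := exists_neWord_prod_eq g hg
  have hex : ∀ i j : Fin 3, ∃ k : Fin 3, k ≠ i ∧ k ≠ j := by decide
  obtain ⟨k, hki, hkj⟩ := hex i j
  obtain ⟨m, hmk⟩ := exists_ne k
  obtain ⟨a, ha⟩ := exists_ne (1 : G k)
  obtain ⟨b, hb⟩ := exists_ne (1 : G m)
  set t : CoprodI G := of a * of b with ht
  set C := Subgroup.centralizer ({g} : Set (CoprodI G)) with hC
  have hinj : Function.Injective
      (fun n : ℕ => (QuotientGroup.mk (t ^ n * of a) : CoprodI G ⧸ C)) := by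
    intro n n' hnn
    rw [QuotientGroup.eq, hC, Subgroup.mem_centralizer_iff] at hnn
    have h1 := hnn g (Set.mem_singleton g)
    have h2 : (t ^ n * of a) * g * (t ^ n * of a)⁻¹
        = (t ^ n' * of a) * g * (t ^ n' * of a)⁻¹ :=
      conj_eq_of_comm _ _ _ h1
    have h3 : (conjNeWord hki hkj.symm hmk.symm ha hb w n).prod
        = (conjNeWord hki hkj.symm hmk.symm ha hb w n').prod := by
      rw [conjNeWord_prod, conjNeWord_prod, hw, ← ht, h2]
    have h4 := word_prod_injective h3
    have h5 := congrArg (fun u : Word G => u.toList.length) h4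
    simp only [toWord_toList, conjNeWord_length] at h5
    omega
  have : Infinite (CoprodI G ⧸ C) := Infinite.of_injective _ hinj
  exact Subgroup.index_eq_zero_iff_infinite.2 this
end
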